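/- Let V be a finite-dimensional real vector space, ω : V → V* a nondegenerate skew-symmetric linear map, and T : V → V a linear map such that ω ∘ T is skew-symmetric (equivalently, ω(u, T(v)) = ω(T(u), v) for all u, v ∈ V). Let B = ω ∘ T and let 𝓙 be the B-field transform of the symplectic GCS defined by ω (explicitly, 𝓙 = [[T, -ω⁻¹],[ω∘(1+T²), -T*]]). Then: (i) 𝓙 is symplectic if and only if T = 0; (ii) 𝓙 is β-symplectic if and only if 1 + T² : V → V is bijective (equivalently, i is not an eigenvalue of the complexification of T); (iii) 𝓙 is β-complex if and only if T² = -1. -/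
import Mathlib


open Module LinearMap

noncomputable def gcPair (V : Type*) [AddCommGroup V] [Module ℝ V]
    (x y : V × Module.Dual ℝ V) : ℝ :=
  -(1/2) * (x.2 y.1 + y.2 x.1)

noncomputable def IsGCS (V : Type*) [AddCommGroup V] [Module ℝ V]
    (J : (V × Module.Dual ℝ V) →ₗ[ℝ] (V × Module.Dual ℝ V)) : Prop :=
  J ∘ₗ J = -LinearMap.id ∧ ∀ x y, gcPair V (J x) (J y) = gcPair V x y

section Blocks

variable (V : Type*) [AddCommGroup V] [Module ℝ V]

noncomputable def blk1 (J : (V × Module.Dual ℝ V) →ₗ[ℝ] (V × Module.Dual ℝ V)) :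
    V →ₗ[ℝ] V :=
  (LinearMap.fst ℝ V (Module.Dual ℝ V)) ∘ₗ J ∘ₗ (LinearMap.inl ℝ V (Module.Dual ℝ V))

noncomputable def blk2 (J : (V × Module.Dual ℝ V) →ₗ[ℝ] (V × Module.Dual ℝ V)) :
    Module.Dual ℝ V →ₗ[ℝ] V :=
  (LinearMap.fst ℝ V (Module.Dual ℝ V)) ∘ₗ J ∘ₗ (LinearMap.inr ℝ V (Module.Dual ℝ V))

noncomputable def blk3 (J : (V × Module.Dual ℝ V) →ₗ[ℝ] (V × Module.Dual ℝ V)) :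
    V →ₗ[ℝ] Module.Dual ℝ V :=
  (LinearMap.snd ℝ V (Module.Dual ℝ V)) ∘ₗ J ∘ₗ (LinearMap.inl ℝ V (Module.Dual ℝ V))

noncomputable def blk4 (J : (V × Module.Dual ℝ V) →ₗ[ℝ] (V × Module.Dual ℝ V)) :
    Module.Dual ℝ V →ₗ[ℝ] Module.Dual ℝ V :=
  (LinearMap.snd ℝ V (Module.Dual ℝ V)) ∘ₗ J ∘ₗ (LinearMap.inr ℝ V (Module.Dual ℝ V))

/-- The endomorphism of `V ⊕ V*` with block matrix `[[A,B],[C,D]]`. -/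
noncomputable def ofBlocks (A : V →ₗ[ℝ] V) (B : Module.Dual ℝ V →ₗ[ℝ] V)
    (C : V →ₗ[ℝ] Module.Dual ℝ V) (D : Module.Dual ℝ V →ₗ[ℝ] Module.Dual ℝ V) :
    (V × Module.Dual ℝ V) →ₗ[ℝ] (V × Module.Dual ℝ V) :=
  LinearMap.prod
    (A ∘ₗ LinearMap.fst ℝ V (Module.Dual ℝ V) + B ∘ₗ LinearMap.snd ℝ V (Module.Dual ℝ V))
    (C ∘ₗ LinearMap.fst ℝ V (Module.Dual ℝ V) + D ∘ₗ LinearMap.snd ℝ V (Module.Dual ℝ V))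

/-- Skew-symmetry for a map `V → V*`. -/
def SkewF (B : V →ₗ[ℝ] Module.Dual ℝ V) : Prop := ∀ u v : V, B u v = -(B v u)

/-- Skew-symmetry for a map `V* → V`. -/
def SkewB (β : Module.Dual ℝ V →ₗ[ℝ] V) : Prop :=
  ∀ f g : Module.Dual ℝ V, f (β g) = -(g (β f))

/-- The B-field automorphism `[[1,0],[B,1]]`. -/
noncomputable def calB (B : V →ₗ[ℝ] Module.Dual ℝ V) :
    (V × Module.Dual ℝ V) →ₗ[ℝ] (V × Module.Dual ℝ V) :=
  ofBlocks V LinearMap.id 0 B LinearMap.id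

/-- The β-field automorphism `[[1,β],[0,1]]`. -/
noncomputable def calBeta (β : Module.Dual ℝ V →ₗ[ℝ] V) :
    (V × Module.Dual ℝ V) →ₗ[ℝ] (V × Module.Dual ℝ V) :=
  ofBlocks V LinearMap.id β 0 LinearMap.id

/-- A GCS is complex if it equals `[[J,0],[0,-J*]]` for a complex structure `J` on `V`. -/
noncomputable def IsComplexGCS (J : (V × Module.Dual ℝ V) →ₗ[ℝ] (V × Module.Dual ℝ V)) :
    Prop :=
  ∃ Jc : V →ₗ[ℝ] V, Jc ∘ₗ Jc = -LinearMap.id ∧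
    J = ofBlocks V Jc 0 0 (-(Jc.dualMap))

/-- A GCS is symplectic if it equals `[[0,-ω⁻¹],[ω,0]]` for a nondegenerate
skew-symmetric `ω : V → V*`. -/
noncomputable def IsSymplecticGCS (J : (V × Module.Dual ℝ V) →ₗ[ℝ] (V × Module.Dual ℝ V)) :
    Prop :=
  ∃ (ω : V →ₗ[ℝ] Module.Dual ℝ V) (ω' : Module.Dual ℝ V →ₗ[ℝ] V),
    SkewF V ω ∧ ω' ∘ₗ ω = LinearMap.id ∧ ω ∘ₗ ω' = LinearMap.id ∧
      J = ofBlocks V 0 (-ω') ω 0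

/-- B-field transform of a complex GCS. -/
noncomputable def IsBComplex (J : (V × Module.Dual ℝ V) →ₗ[ℝ] (V × Module.Dual ℝ V)) :
    Prop :=
  ∃ B : V →ₗ[ℝ] Module.Dual ℝ V, SkewF V B ∧
    ∃ J₀, IsComplexGCS V J₀ ∧ J = calB V B ∘ₗ J₀ ∘ₗ calB V (-B)

/-- β-field transform of a complex GCS. -/
noncomputable def IsBetaComplex (J : (V × Module.Dual ℝ V) →ₗ[ℝ] (V × Module.Dual ℝ V)) :
    Prop :=
  ∃ β : Module.Dual ℝ V →ₗ[ℝ] V, SkewB V β ∧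
    ∃ J₀, IsComplexGCS V J₀ ∧ J = calBeta V β ∘ₗ J₀ ∘ₗ calBeta V (-β)

/-- B-field transform of a symplectic GCS. -/
noncomputable def IsBSymplectic (J : (V × Module.Dual ℝ V) →ₗ[ℝ] (V × Module.Dual ℝ V)) :
    Prop :=
  ∃ B : V →ₗ[ℝ] Module.Dual ℝ V, SkewF V B ∧
    ∃ J₀, IsSymplecticGCS V J₀ ∧ J = calB V B ∘ₗ J₀ ∘ₗ calB V (-B)

/-- β-field transform of a symplectic GCS. -/
noncomputable def IsBetaSymplectic (J : (V × Module.Dual ℝ V) →ₗ[ℝ] (V × Module.Dual ℝ V)) :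
    Prop :=
  ∃ β : Module.Dual ℝ V →ₗ[ℝ] V, SkewB V β ∧
    ∃ J₀, IsSymplecticGCS V J₀ ∧ J = calBeta V β ∘ₗ J₀ ∘ₗ calBeta V (-β)

end Blocks

section Aux
variable {V : Type*} [AddCommGroup V] [Module ℝ V]

lemma ofBlocks_apply (A : V →ₗ[ℝ] V) (B : Module.Dual ℝ V →ₗ[ℝ] V)
    (C : V →ₗ[ℝ] Module.Dual ℝ V) (D : Module.Dual ℝ V →ₗ[ℝ] Module.Dual ℝ V)
    (x : V × Module.Dual ℝ V) :
    ofBlocks V A B C D x = (A x.1 + B x.2, C x.1 + D x.2) := rfl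

lemma calB_apply (B : V →ₗ[ℝ] Module.Dual ℝ V) (x : V × Module.Dual ℝ V) :
    calB V B x = (x.1, B x.1 + x.2) := by
  simp [calB, ofBlocks_apply]

lemma calBeta_apply (β : Module.Dual ℝ V →ₗ[ℝ] V) (x : V × Module.Dual ℝ V) :
    calBeta V β x = (x.1 + β x.2, x.2) := by
  simp [calBeta, ofBlocks_apply]

lemma blk1_ofBlocks (A : V →ₗ[ℝ] V) (B : Module.Dual ℝ V →ₗ[ℝ] V)
    (C : V →ₗ[ℝ] Module.Dual ℝ V) (D : Module.Dual ℝ V →ₗ[ℝ] Module.Dual ℝ V) :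
    blk1 V (ofBlocks V A B C D) = A := by
  ext v; simp [blk1, ofBlocks_apply]

lemma blk3_ofBlocks (A : V →ₗ[ℝ] V) (B : Module.Dual ℝ V →ₗ[ℝ] V)
    (C : V →ₗ[ℝ] Module.Dual ℝ V) (D : Module.Dual ℝ V →ₗ[ℝ] Module.Dual ℝ V) :
    blk3 V (ofBlocks V A B C D) = C := by
  ext v; simp [blk3, ofBlocks_apply]

lemma blk3_conjBeta (β : Module.Dual ℝ V →ₗ[ℝ] V)
    (K : (V × Module.Dual ℝ V) →ₗ[ℝ] (V × Module.Dual ℝ V)) :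
    blk3 V (calBeta V β ∘ₗ K ∘ₗ calBeta V (-β)) = blk3 V K := by
  ext v; simp [blk3, calBeta_apply]

end Aux
theorem bFieldTransform_of_symplectic_via_T
    (V : Type*) [AddCommGroup V] [Module ℝ V] [FiniteDimensional ℝ V]
    (ω : V →ₗ[ℝ] Module.Dual ℝ V) (ω' : Module.Dual ℝ V →ₗ[ℝ] V)
    (hskew : SkewF V ω) (hωω' : ω' ∘ₗ ω = LinearMap.id) (hω'ω : ω ∘ₗ ω' = LinearMap.id)
    (T : V →ₗ[ℝ] V) (hT : ∀ u v : V, ω u (T v) = ω (T u) v)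
    (J : (V × Module.Dual ℝ V) →ₗ[ℝ] (V × Module.Dual ℝ V))
    (hJ : J = calB V (ω ∘ₗ T) ∘ₗ (ofBlocks V 0 (-ω') ω 0) ∘ₗ calB V (-(ω ∘ₗ T))) :
    (IsSymplecticGCS V J ↔ T = 0) ∧
    (IsBetaSymplectic V J ↔ Function.Bijective ((LinearMap.id : V →ₗ[ℝ] V) + T ∘ₗ T)) ∧
    (IsBetaComplex V J ↔ T ∘ₗ T = -LinearMap.id) := by
  have hωp : ∀ v, ω' (ω v) = v := fun v => LinearMap.ext_iff.1 hωω' v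
  have hω'p : ∀ f, ω (ω' f) = f := fun f => LinearMap.ext_iff.1 hω'ω f
  have hJ4 : J = ofBlocks V T (-ω') (ω + ω ∘ₗ (T ∘ₗ T)) (-(ω ∘ₗ (T ∘ₗ ω'))) := by
    rw [hJ]; apply LinearMap.ext; rintro ⟨v, f⟩
    simp [calB_apply, ofBlocks_apply, hωp, map_sub, map_add, Prod.ext_iff]
    abel
  refine ⟨?_, ?_, ?_⟩
  · -- (i) symplectic ↔ T = 0
    constructor
    · rintro ⟨σ, σ', hsk, h1, h2, hEq⟩
      have h := congrArg (blk1 V) (hJ4.symm.trans hEq)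
      rwa [blk1_ofBlocks, blk1_ofBlocks] at h
    · rintro rfl
      refine ⟨ω, ω', hskew, hωω', hω'ω, ?_⟩
      rw [hJ4]; apply LinearMap.ext; rintro ⟨v, f⟩
      simp [ofBlocks_apply]
  · -- (ii) β-symplectic ↔ 1 + T² bijective
    constructor
    · rintro ⟨β, hβ, J₀, ⟨σ, σ', hsk, h1, h2, rfl⟩, hEq⟩
      have h := congrArg (blk3 V) (hJ4.symm.trans hEq)
      rw [blk3_ofBlocks, blk3_conjBeta, blk3_ofBlocks] at h
      have h1p : ∀ f, σ' (σ f) = f := fun f => LinearMap.ext_iff.1 h1 f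
      have h2p : ∀ f, σ (σ' f) = f := fun f => LinearMap.ext_iff.1 h2 f
      have hσp : ∀ v, σ v = ω v + ω (T (T v)) := fun v => (LinearMap.ext_iff.1 h v).symm
      constructor
      · apply Function.LeftInverse.injective (g := fun v => σ' (ω v))
        intro v
        simp only [LinearMap.add_apply, LinearMap.id_apply, LinearMap.comp_apply,
          map_add, ← hσp, h1p]
      · apply Function.RightInverse.surjective (g := fun v => σ' (ω v))
        intro v
        have : σ (σ' (ω v)) = ω v := h2p _
        rw [hσp] at this
        have := congrArg ω' this
        simpa [hωp, map_add] using this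
    · intro h
      set P : V →ₗ[ℝ] V := LinearMap.id + T ∘ₗ T with hP
      have hPap : ∀ v, P v = v + T (T v) := fun v => rfl
      let e : V ≃ₗ[ℝ] V := LinearEquiv.ofBijective P h
      set S : V →ₗ[ℝ] V := (e.symm : V →ₗ[ℝ] V) with hS
      have hSP : ∀ v, S (v + T (T v)) = v := by
        intro v
        have : S (P v) = v := e.symm_apply_apply v
        rwa [hPap] at this
      have hPS : ∀ v, S v + T (T (S v)) = v := by
        intro v
        have : P (S v) = v := e.apply_symm_apply v
        rwa [hPap] at this
      have hTS : ∀ v, T (S v) = S (T v) := by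
        intro v
        have h1 : T (S v) + T (T (T (S v))) = T v := by rw [← map_add, hPS]
        have h2 := hSP (T (S v))
        rw [h1] at h2
        exact h2.symm
      have hPT : ∀ v, P (T v) = T (P v) := by
        intro v; rw [hPap, hPap, map_add]
      have hωS : ∀ u v, ω u (S v) = ω (S u) v := by
        intro u v
        conv_lhs => rw [← hPS u]
        rw [show ω (S u + T (T (S u))) (S v) = ω (S u) (S v) + ω (T (T (S u))) (S v) by
          rw [map_add]; rfl]
        rw [← hT, ← hT, ← map_add, hPS]
      refine ⟨T ∘ₗ (S ∘ₗ ω'), ?_, ofBlocks V 0 (-(S ∘ₗ ω')) (ω ∘ₗ P) 0,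
        ⟨ω ∘ₗ P, S ∘ₗ ω', ?_, ?_, ?_, rfl⟩, ?_⟩
      · -- SkewB β
        intro f g
        have hf : (f : Module.Dual ℝ V) = ω (ω' f) := (hω'p f).symm
        have hg : (g : Module.Dual ℝ V) = ω (ω' g) := (hω'p g).symm
        simp only [LinearMap.comp_apply]
        conv_lhs => rw [hf]
        conv_rhs => rw [hg]
        rw [hT, hωS, hskew, hTS]
      · -- SkewF σ
        intro u v
        simp only [LinearMap.comp_apply]
        rw [show (ω (P u)) v = ω u (P v) by
          rw [hPap, hPap, map_add, map_add]; simp only [LinearMap.add_apply]; rw [hT, hT]]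
        exact hskew u (P v)
      · ext f; simp only [LinearMap.comp_apply, LinearMap.id_apply]
        rw [hωp, hPap, hSP]
      · ext f; simp only [LinearMap.comp_apply, LinearMap.id_apply]
        rw [hPap, hPS, hω'p]
      · rw [hJ4]; apply LinearMap.ext; rintro ⟨v, f⟩
        simp only [LinearMap.comp_apply, calBeta_apply, ofBlocks_apply,
          LinearMap.neg_apply, LinearMap.zero_apply, LinearMap.add_apply,
          map_add, map_neg, map_sub, LinearMap.id_apply, Prod.ext_iff]
        constructor
        · simp only [map_zero, hωp, zero_add, neg_zero, add_zero]
          rw [hPap v, hSP, hPap (T (S (ω' f))), hSP]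
          conv_lhs => rw [← hPS (ω' f)]
          abel
        · rw [hPT (S (ω' f)), hPap (S (ω' f)), hPS, hPap v, map_add, add_zero]
  · -- (iii) β-complex ↔ T² = -1
    constructor
    · rintro ⟨β, hβ, J₀, ⟨Jc, hJc, rfl⟩, hEq⟩
      have h := congrArg (blk3 V) (hJ4.symm.trans hEq)
      rw [blk3_ofBlocks, blk3_conjBeta, blk3_ofBlocks] at h
      ext v
      have hv := LinearMap.ext_iff.1 h v
      have h0 : ω (v + T (T v)) = 0 := by
        simpa [map_add] using hv
      have h2 := congrArg ω' h0
      rw [hωp, map_zero] at h2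
      simp only [LinearMap.comp_apply, LinearMap.neg_apply, LinearMap.id_apply]
      exact eq_neg_of_add_eq_zero_left (by rwa [add_comm] at h2)
    · intro h
      have ht2 : ∀ v, T (T v) = -v := by
        intro v
        have := LinearMap.ext_iff.1 h v
        simpa using this
      have hdual : ∀ f v, (T.dualMap f) v = ω (T (ω' f)) v := by
        intro f v
        rw [← hT, hω'p]
        rfl
      have hdual' : ∀ f, ω' (T.dualMap f) = T (ω' f) := by
        intro f
        conv_lhs => rw [show T.dualMap f = ω (T (ω' f)) from LinearMap.ext (hdual f)]
        rw [hωp]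
      refine ⟨(-(1/2) : ℝ) • (T ∘ₗ ω'), ?_, ofBlocks V T 0 0 (-(T.dualMap)),
        ⟨T, h, rfl⟩, ?_⟩
      · intro f g
        have key : f (T (ω' g)) = -(g (T (ω' f))) := by
          conv_lhs => rw [← hω'p f]
          rw [hT, hskew (T (ω' f)) (ω' g), hω'p]
        simp only [LinearMap.smul_apply, LinearMap.comp_apply, map_smul, smul_eq_mul]
        rw [key]; ring
      · rw [hJ4]; apply LinearMap.ext; rintro ⟨v, f⟩
        simp only [LinearMap.comp_apply, calBeta_apply, ofBlocks_apply,
          LinearMap.neg_apply, LinearMap.zero_apply, LinearMap.add_apply,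
          LinearMap.smul_apply, map_add, map_neg, map_smul,
          LinearMap.id_apply, Prod.ext_iff, smul_eq_mul]
        constructor
        · simp only [map_zero, smul_zero, neg_zero, add_zero, zero_add]
          rw [hdual' f, ht2 (ω' f)]
          module
        · rw [ht2 v, map_neg, show T.dualMap f = ω (T (ω' f)) from LinearMap.ext (hdual f)]
          simp only [smul_zero, neg_zero, zero_add]
          abel
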